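/- arXiv:2504.08911 — 6 statements merged into one kernel-verified Lean document; each statement's English description precedes it below -/
import Mathlib

section
/- If a rank-1 tensor x ∈ ℝ^{n_1 × ... × n_d} is nonzero at index s, then x = x^(1) ⊗ ... ⊗ x^(d) where x^(1)_j = x_{j s_2 ... s_d} and for i > 1, x^(i)_j = x_{s_1 ... j ... s_d} / x_s (the index j placed in position i). -/
/-- Multi-index set `[n₁] × ⋯ × [n_d]`. -/
abbrev Idx {d : ℕ} (n : Fin d → ℕ) : Type := ∀ i, Fin (n i)

/-- The elementary (rank-1) tensor with factors `x i`. -/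
def tensorProd {d : ℕ} {n : Fin d → ℕ} (x : ∀ i, Fin (n i) → ℝ) : Idx n → ℝ :=
  fun a => ∏ i, x i (a i)

/-- Componentwise minimum of multi-indices. -/
def amin {d : ℕ} {n : Fin d → ℕ} (a b : Idx n) : Idx n := fun i => min (a i) (b i)

/-- Componentwise maximum of multi-indices. -/
def amax {d : ℕ} {n : Fin d → ℕ} (a b : Idx n) : Idx n := fun i => max (a i) (b i)

/-- If a tensor satisfying the rank-1 binomial equations is nonzero at index `s`, then it is
the tensor product of the vectors `x^(1)_j = x_{j s₂ ⋯ s_d}` and, for `i > 1`,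
`x^(i)_j = x_{s₁ ⋯ j ⋯ s_d} / x_s` (index `j` placed in position `i`). -/
theorem rank_one_factorization {d : ℕ} [NeZero d] {n : Fin d → ℕ}
    (x : Idx n → ℝ) (s : Idx n)
    (hbin : ∀ a b : Idx n, x a * x b = x (amin a b) * x (amax a b))
    (hs : x s ≠ 0) :
    x = tensorProd (fun i j =>
      if i = 0 then x (Function.update s i j) else x (Function.update s i j) / x s) := by
  funext a
  have key : ∀ k, k ≤ d →
      x (fun i => if (i : ℕ) < k then a i else s i) * (x s) ^ k =
        x s * ∏ i ∈ Finset.univ.filter (fun i : Fin d => (i : ℕ) < k),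
          x (Function.update s i (a i)) := by
    intro k
    induction k with
    | zero => intro _; simp
    | succ k ih =>
      intro hk
      have hkd : k < d := hk
      have ihk := ih (le_of_lt hkd)
      set ik : Fin d := ⟨k, hkd⟩ with hik
      have step : x (fun i => if (i : ℕ) < k + 1 then a i else s i) * x s =
          x (fun i => if (i : ℕ) < k then a i else s i) *
            x (Function.update s ik (a ik)) := by
        have hmin : amin (fun i => if (i : ℕ) < k + 1 then a i else s i) s =
            amin (fun i => if (i : ℕ) < k then a i else s i)
              (Function.update s ik (a ik)) := by
          funext i
          simp only [amin, Function.update_apply]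
          rcases lt_trichotomy (i : ℕ) k with h | h | h
          · have hne : i ≠ ik := by
              intro he; rw [he] at h; exact absurd rfl (Nat.ne_of_lt h)
            simp [h, Nat.lt_succ_of_lt h, hne]
          · have heq : i = ik := Fin.ext h
            subst heq
            simp [h, min_comm]
          · have hne : i ≠ ik := by
              intro he; rw [he] at h; exact absurd rfl (Nat.ne_of_gt h)
            simp [Nat.not_lt_of_gt h, Nat.lt_irrefl, hne,
              Nat.not_lt.mpr (Nat.succ_le_of_lt h)]
        have hmax : amax (fun i => if (i : ℕ) < k + 1 then a i else s i) s =
            amax (fun i => if (i : ℕ) < k then a i else s i)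
              (Function.update s ik (a ik)) := by
          funext i
          simp only [amax, Function.update_apply]
          rcases lt_trichotomy (i : ℕ) k with h | h | h
          · have hne : i ≠ ik := by
              intro he; rw [he] at h; exact absurd rfl (Nat.ne_of_lt h)
            simp [h, Nat.lt_succ_of_lt h, hne]
          · have heq : i = ik := Fin.ext h
            subst heq
            simp [h, max_comm]
          · have hne : i ≠ ik := by
              intro he; rw [he] at h; exact absurd rfl (Nat.ne_of_gt h)
            simp [Nat.not_lt_of_gt h, Nat.lt_irrefl, hne,
              Nat.not_lt.mpr (Nat.succ_le_of_lt h)]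
        rw [hbin, hmin, hmax, ← hbin]
      have hfilter : Finset.univ.filter (fun i : Fin d => (i : ℕ) < k + 1) =
          insert ik (Finset.univ.filter (fun i : Fin d => (i : ℕ) < k)) := by
        ext i
        simp only [Finset.mem_filter, Finset.mem_univ, true_and, Finset.mem_insert]
        constructor
        · intro h
          rcases Nat.lt_succ_iff_lt_or_eq.mp h with h | h
          · exact Or.inr (by simpa using h)
          · exact Or.inl (Fin.ext h)
        · rintro (h | h)
          · rw [h]; exact Nat.lt_succ_self k
          · exact Nat.lt_succ_of_lt h
      have hnotmem : ik ∉ Finset.univ.filter (fun i : Fin d => (i : ℕ) < k) := by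
        have hcoe : (ik : ℕ) = k := rfl
        simp [Finset.mem_filter, hcoe]
      calc x (fun i => if (i : ℕ) < k + 1 then a i else s i) * x s ^ (k + 1)
          = (x (fun i => if (i : ℕ) < k + 1 then a i else s i) * x s) * x s ^ k := by
            ring
        _ = (x (fun i => if (i : ℕ) < k then a i else s i) * x s ^ k) *
              x (Function.update s ik (a ik)) := by rw [step]; ring
        _ = (x s * ∏ i ∈ Finset.univ.filter (fun i : Fin d => (i : ℕ) < k),
              x (Function.update s i (a i))) * x (Function.update s ik (a ik)) := by
            rw [ihk]
        _ = x s * ∏ i ∈ Finset.univ.filter (fun i : Fin d => (i : ℕ) < k + 1),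
              x (Function.update s i (a i)) := by
            rw [hfilter, Finset.prod_insert hnotmem]; ring
  have hmain := key d le_rfl
  have h1 : (fun i : Fin d => if (i : ℕ) < d then a i else s i) = a := by
    funext i; simp [i.isLt]
  have h2 : Finset.univ.filter (fun i : Fin d => (i : ℕ) < d) =
      (Finset.univ : Finset (Fin d)) := by
    apply Finset.filter_true_of_mem; intro i _; exact i.isLt
  rw [h1, h2] at hmain
  -- hmain : x a * x s ^ d = x s * ∏ i, x (Function.update s i (a i))
  show x a = tensorProd _ a
  unfold tensorProd
  apply mul_right_cancel₀ (pow_ne_zero d hs)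
  rw [hmain]
  have hpow : (x s) ^ d = ∏ _i : Fin d, x s := by
    rw [Finset.prod_const, Finset.card_univ, Fintype.card_fin]
  rw [hpow, ← Finset.prod_mul_distrib]
  have heach : ∀ i : Fin d,
      (if i = 0 then x (Function.update s i (a i))
        else x (Function.update s i (a i)) / x s) * x s =
      x (Function.update s i (a i)) * (if i = 0 then x s else 1) := by
    intro i
    by_cases h : i = 0
    · simp [h]
    · simp [h, div_mul_cancel₀ _ hs]
  rw [Finset.prod_congr rfl (fun i _ => heach i), Finset.prod_mul_distrib]
  have hone : (∏ i : Fin d, (if i = 0 then x s else 1)) = x s := by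
    rw [Finset.prod_ite_eq']
    simp
  rw [hone]
  ring
end

section
/- The set 𝒢₀ = { x_a x_b − x_{a∧b} x_{a∨b} : a, b ∈ [𝐧], a < b lexicographically and a_i > b_i for some i } is a reduced Gröbner basis, with respect to the graded reverse lexicographic order, of the ideal I₀ generated by all binomials x_a x_b − x_{a∧b} x_{a∨b}. -/
open MvPolynomial

/-- Lexicographic order on multi-indices: `a < b` iff at the first position where they
differ, `a` is smaller.  (With this convention the variable `x_a` is *larger* in the
variable order `x_{1⋯1} > x_{1⋯2} > ⋯ > x_{n₁⋯n_d}` exactly when `a` is lexicographically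
smaller.) -/
def idxLt {d : ℕ} {n : Fin d → ℕ} (a b : Idx n) : Prop :=
  ∃ i, a i < b i ∧ ∀ j, j < i → a j = b j

/-- Total degree of an exponent vector. -/
def expDeg {σ : Type*} (α : σ →₀ ℕ) : ℕ := α.sum fun _ k => k

/-- The graded reverse lexicographic order on exponent vectors (viewing the variable
`x_a` with lexicographically smaller index `a` as the larger variable): `α < β` iff
`deg α < deg β`, or the degrees agree and at the largest (in the variable order, i.e.
lexicographically largest) index where they differ, `α` has the *larger* exponent. -/
def grevlexLt {d : ℕ} {n : Fin d → ℕ} (α β : Idx n →₀ ℕ) : Prop :=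
  expDeg α < expDeg β ∨
    (expDeg α = expDeg β ∧ ∃ j, β j < α j ∧ ∀ k, idxLt j k → α k = β k)

/-- `m` is the leading monomial (w.r.t. grevlex) of the polynomial `f`. -/
def IsLeadMon {d : ℕ} {n : Fin d → ℕ} (f : MvPolynomial (Idx n) ℝ)
    (m : Idx n →₀ ℕ) : Prop :=
  m ∈ f.support ∧ ∀ m' ∈ f.support, m' ≠ m → grevlexLt m' m

/-- `G` is a Gröbner basis of the ideal `I` w.r.t. grevlex: `G` generates `I` and the
leading monomial of every nonzero element of `I` is divisible by the leading monomial of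
some element of `G`. -/
def IsGroebnerBasis {d : ℕ} {n : Fin d → ℕ} (G : Set (MvPolynomial (Idx n) ℝ))
    (I : Ideal (MvPolynomial (Idx n) ℝ)) : Prop :=
  Ideal.span G = I ∧
    ∀ f ∈ I, f ≠ 0 → ∀ m, IsLeadMon f m →
      ∃ g ∈ G, ∃ mg, IsLeadMon g mg ∧ mg ≤ m

/-- `G` is a *reduced* Gröbner basis of `I`: it is a Gröbner basis, every element is monic,
and no monomial of an element of `G` is divisible by the leading monomial of another
element of `G`. -/
def IsReducedGroebnerBasis {d : ℕ} {n : Fin d → ℕ} (G : Set (MvPolynomial (Idx n) ℝ))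
    (I : Ideal (MvPolynomial (Idx n) ℝ)) : Prop :=
  IsGroebnerBasis G I ∧
    ∀ g ∈ G, (∀ m, IsLeadMon g m → coeff m g = 1) ∧
      ∀ m ∈ g.support, ∀ g' ∈ G, g' ≠ g → ∀ m', IsLeadMon g' m' → ¬ m' ≤ m

/-- The set of rank-1 binomials `x_a x_b − x_{a∧b} x_{a∨b}`. -/
noncomputable def rk1Binomials {d : ℕ} (n : Fin d → ℕ) : Set (MvPolynomial (Idx n) ℝ) :=
  {f | ∃ a b : Idx n, f = X a * X b - X (amin a b) * X (amax a b)}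

/-- The ideal `I₀` generated by all rank-1 binomials. -/
noncomputable def I0 {d : ℕ} (n : Fin d → ℕ) : Ideal (MvPolynomial (Idx n) ℝ) :=
  Ideal.span (rk1Binomials n)

/-- The reduced Gröbner basis `𝒢₀` of `I₀`. -/
noncomputable def G0 {d : ℕ} (n : Fin d → ℕ) : Set (MvPolynomial (Idx n) ℝ) :=
  {f | ∃ a b : Idx n, idxLt a b ∧ (∃ i, b i < a i) ∧
    f = X a * X b - X (amin a b) * X (amax a b)}

/-!
The additive map `profile` sends an exponent vector to its degree together with, for each
coordinate `i`, the multiset (as a finsupp) of the `i`-th coordinates of its variables. It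
identifies `x_a x_b` with `x_{a∧b} x_{a∨b}`, so the induced ring map `profileMap` kills `I₀`: in
every fibre of `profile`, the coefficients of an element of `I₀` sum to zero. A monomial whose
variables form a chain for the componentwise order is the grevlex-smallest monomial of its fibre
(peel off the top of the chain). So the leading monomial of `f ∈ I₀` cannot be a chain, since it
would then be alone in its fibre among the monomials of `f`. It therefore contains some `x_a x_b`
with `a, b` incomparable, which is the leading monomial of the element of `𝒢₀` built from `a`
and `b`.
-/

open Finsupp (degree single single_apply)

section Lex

variable {ι : Type*} {β : ι → Type*} [LinearOrder ι] [WellFoundedLT ι] [∀ i, PartialOrder (β i)]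

theorem IsChain.le_of_toLex_le {s : Set (∀ i, β i)} (hs : IsChain (· ≤ ·) s) {a b : ∀ i, β i}
    (ha : a ∈ s) (hb : b ∈ s) (h : toLex a ≤ toLex b) : a ≤ b := by
  rcases eq_or_ne a b with rfl | hne
  · exact le_rfl
  · exact (hs ha hb hne).resolve_right fun hba =>
      (Pi.toLex_strictMono (lt_of_le_of_ne hba hne.symm)).not_ge h

end Lex

theorem Finsupp.apply_le_mapDomain_apply {α β M : Type*} [AddCommMonoid M] [PartialOrder M]
    [CanonicallyOrderedAdd M] (f : α → β) (x : α →₀ M) (a : α) : x a ≤ x.mapDomain f (f a) := by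
  classical
  rw [Finsupp.mapDomain_apply_eq_sum]
  by_cases ha : a ∈ x.support
  · exact Finset.single_le_sum_of_canonicallyOrdered (Finset.mem_filter.2 ⟨ha, rfl⟩)
  · simp [Finsupp.notMem_support_iff.1 ha]

section Grevlex

variable {d : ℕ} {n : Fin d → ℕ}

theorem idxLt_iff_toLex_lt {a b : Idx n} : idxLt a b ↔ toLex a < toLex b :=
  exists_congr fun _ => and_comm

theorem expDeg_eq_degree {σ : Type*} (α : σ →₀ ℕ) : expDeg α = degree α := rfl

theorem grevlexLt_asymm {α β : Idx n →₀ ℕ} (h : grevlexLt α β) : ¬ grevlexLt β α := by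
  rintro (h' | ⟨hd', j', hj', hk'⟩) <;> rcases h with h | ⟨hd, j, hj, hk⟩
  · omega
  · omega
  · omega
  · rcases lt_trichotomy (toLex j) (toLex j') with hlt | heq | hgt
    · exact (hk j' (idxLt_iff_toLex_lt.2 hlt)).not_lt hj'
    · cases toLex.injective heq
      omega
    · exact (hk' j (idxLt_iff_toLex_lt.2 hgt)).not_lt hj

theorem grevlexLt.add_right {α β : Idx n →₀ ℕ} (h : grevlexLt α β) (γ : Idx n →₀ ℕ) :
    grevlexLt (α + γ) (β + γ) := by
  simp only [grevlexLt, expDeg_eq_degree, map_add] at h ⊢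
  rcases h with h | ⟨hd, j, hj, hk⟩
  · exact Or.inl (by omega)
  · exact Or.inr ⟨by omega, j, by simpa using hj, fun k hk' => by simp [hk k hk']⟩

theorem IsLeadMon.unique {f : MvPolynomial (Idx n) ℝ} {m m' : Idx n →₀ ℕ}
    (h : IsLeadMon f m) (h' : IsLeadMon f m') : m = m' := by
  by_contra hne
  exact grevlexLt_asymm (h.2 m' h'.1 (Ne.symm hne)) (h'.2 m h.1 hne)

end Grevlex

section PairExp

variable {σ : Type*}

noncomputable def pairExp (a b : σ) : σ →₀ ℕ := single a 1 + single b 1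

theorem pairExp_comm (a b : σ) : pairExp a b = pairExp b a := add_comm _ _

theorem degree_pairExp (a b : σ) : degree (pairExp a b) = 2 := by
  simp [pairExp]

theorem mem_support_pairExp {a b c : σ} : c ∈ (pairExp a b).support ↔ c = a ∨ c = b := by
  classical
  simp only [pairExp, Finsupp.mem_support_iff, Finsupp.coe_add, Pi.add_apply, single_apply]
  split_ifs <;> grind

theorem pairExp_apply_eq_zero_iff {a b c : σ} : pairExp a b c = 0 ↔ c ≠ a ∧ c ≠ b := by
  rw [← Finsupp.notMem_support_iff, mem_support_pairExp]
  tauto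

theorem pairExp_le {m : σ →₀ ℕ} {a b : σ} (ha : a ∈ m.support) (hb : b ∈ m.support)
    (hab : a ≠ b) : pairExp a b ≤ m := by
  classical
  intro c
  rw [Finsupp.mem_support_iff] at ha hb
  simp only [pairExp, Finsupp.coe_add, Pi.add_apply, single_apply]
  split_ifs <;> grind

theorem X_mul_X_eq_monomial_pairExp {R : Type*} [CommSemiring R] (a b : σ) :
    (X a * X b : MvPolynomial σ R) = monomial (pairExp a b) 1 := by
  rw [X, X, monomial_mul, one_mul, pairExp]

end PairExp

section Binomial

variable {d : ℕ} {n : Fin d → ℕ}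

noncomputable def rk1Binomial (a b : Idx n) : MvPolynomial (Idx n) ℝ :=
  X a * X b - X (amin a b) * X (amax a b)

theorem amin_eq_inf (a b : Idx n) : amin a b = a ⊓ b := rfl

theorem amax_eq_sup (a b : Idx n) : amax a b = a ⊔ b := rfl

theorem rk1Binomial_eq (a b : Idx n) :
    rk1Binomial a b = monomial (pairExp a b) 1 - monomial (pairExp (a ⊓ b) (a ⊔ b)) 1 := by
  rw [rk1Binomial, X_mul_X_eq_monomial_pairExp, X_mul_X_eq_monomial_pairExp, amin_eq_inf,
    amax_eq_sup]

theorem rk1Binomial_comm (a b : Idx n) : rk1Binomial a b = rk1Binomial b a := by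
  rw [rk1Binomial_eq, rk1Binomial_eq, pairExp_comm, inf_comm, sup_comm]

theorem rk1Binomial_eq_zero_of_le {a b : Idx n} (h : a ≤ b) : rk1Binomial a b = 0 := by
  rw [rk1Binomial_eq, inf_eq_left.2 h, sup_eq_right.2 h, sub_self]

theorem mem_support_rk1Binomial {a b : Idx n} {m : Idx n →₀ ℕ}
    (hm : m ∈ (rk1Binomial a b).support) : m = pairExp a b ∨ m = pairExp (a ⊓ b) (a ⊔ b) := by
  classical
  rw [rk1Binomial_eq] at hm
  simpa [support_monomial] using support_sub _ _ _ hm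

theorem grevlexLt_pairExp_inf_sup {a b : Idx n} (h : IncompRel (· ≤ ·) a b) :
    grevlexLt (pairExp (a ⊓ b) (a ⊔ b)) (pairExp a b) := by
  have hsup_a : a ⊔ b ≠ a := fun h' => h.not_ge (sup_eq_left.1 h')
  have hsup_b : a ⊔ b ≠ b := fun h' => h.not_le (sup_eq_right.1 h')
  refine Or.inr ⟨by simp only [expDeg_eq_degree, degree_pairExp], a ⊔ b, ?_, fun k hk => ?_⟩
  · rw [pairExp_apply_eq_zero_iff.2 ⟨hsup_a, hsup_b⟩, pos_iff_ne_zero, Ne,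
      pairExp_apply_eq_zero_iff]
    simp
  · have hzero : ∀ x y, x ≤ a ⊔ b → y ≤ a ⊔ b → pairExp x y k = 0 := fun x y hx hy =>
      have hk : toLex (a ⊔ b) < toLex k := idxLt_iff_toLex_lt.1 hk
      pairExp_apply_eq_zero_iff.2 ⟨fun hkx => (Pi.toLex_monotone (hkx ▸ hx)).not_gt hk,
        fun hky => (Pi.toLex_monotone (hky ▸ hy)).not_gt hk⟩
    rw [hzero _ _ (inf_le_left.trans le_sup_left) le_rfl, hzero _ _ le_sup_left le_sup_right]

theorem pairExp_inf_sup_ne {a b : Idx n} (h : IncompRel (· ≤ ·) a b) :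
    pairExp (a ⊓ b) (a ⊔ b) ≠ pairExp a b := fun heq =>
  grevlexLt_asymm (grevlexLt_pairExp_inf_sup h) (heq ▸ grevlexLt_pairExp_inf_sup h)

theorem coeff_pairExp_rk1Binomial {a b : Idx n} (h : IncompRel (· ≤ ·) a b) :
    coeff (pairExp a b) (rk1Binomial a b) = 1 := by
  rw [rk1Binomial_eq, coeff_sub, coeff_monomial, coeff_monomial, if_pos rfl,
    if_neg (pairExp_inf_sup_ne h), sub_zero]

theorem isLeadMon_rk1Binomial {a b : Idx n} (h : IncompRel (· ≤ ·) a b) :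
    IsLeadMon (rk1Binomial a b) (pairExp a b) := by
  refine ⟨by simp [coeff_pairExp_rk1Binomial h], fun m hm hne => ?_⟩
  rcases mem_support_rk1Binomial hm with rfl | rfl
  · exact absurd rfl hne
  · exact grevlexLt_pairExp_inf_sup h

theorem mem_G0_iff {g : MvPolynomial (Idx n) ℝ} :
    g ∈ G0 n ↔ ∃ a b, toLex a < toLex b ∧ IncompRel (· ≤ ·) a b ∧ g = rk1Binomial a b := by
  have hwit : ∀ a b : Idx n, (∃ i, b i < a i) ↔ ¬ a ≤ b := by simp [Pi.le_def]
  refine exists₂_congr fun a b => ?_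
  rw [idxLt_iff_toLex_lt, hwit, rk1Binomial]
  exact ⟨fun ⟨hab, hnle, hg⟩ =>
      ⟨hab, ⟨hnle, fun hba => (Pi.toLex_monotone hba).not_gt hab⟩, hg⟩,
    fun ⟨hab, h, hg⟩ => ⟨hab, h.not_le, hg⟩⟩

theorem rk1Binomial_mem_G0 {a b : Idx n} (h : IncompRel (· ≤ ·) a b) :
    rk1Binomial a b ∈ G0 n := by
  rcases lt_trichotomy (toLex a) (toLex b) with hlt | heq | hgt
  · exact mem_G0_iff.2 ⟨a, b, hlt, h, rfl⟩
  · exact absurd (toLex.injective heq) h.ne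
  · exact mem_G0_iff.2 ⟨b, a, hgt, h.symm, rk1Binomial_comm a b⟩

theorem span_G0 (n : Fin d → ℕ) : Ideal.span (G0 n) = I0 n := by
  refine le_antisymm (Ideal.span_mono ?_) (Ideal.span_le.2 ?_)
  · rintro g ⟨a, b, -, -, rfl⟩
    exact ⟨a, b, rfl⟩
  · rintro g ⟨a, b, rfl⟩
    by_cases h : IncompRel (· ≤ ·) a b
    · exact Ideal.subset_span (rk1Binomial_mem_G0 h)
    · change rk1Binomial a b ∈ _
      rcases not_incompRel_iff_symmGen.1 h with hab | hba
      · simp [rk1Binomial_eq_zero_of_le hab]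
      · simp [rk1Binomial_comm a b, rk1Binomial_eq_zero_of_le hba]

theorem eq_of_pairExp_le_of_mem_support_rk1Binomial {a b a' b' : Idx n} {m : Idx n →₀ ℕ}
    (hab : toLex a < toLex b) (hab' : toLex a' < toLex b') (h' : IncompRel (· ≤ ·) a' b')
    (hm : m ∈ (rk1Binomial a b).support) (hle : pairExp a' b' ≤ m) : a' = a ∧ b' = b := by
  have hsupp : ∀ c, c = a' ∨ c = b' → c ∈ m.support := fun c hc =>
    Finsupp.support_mono hle (mem_support_pairExp.2 hc)
  have ha' := hsupp a' (Or.inl rfl)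
  have hb' := hsupp b' (Or.inr rfl)
  rcases mem_support_rk1Binomial hm with rfl | rfl <;>
    rw [mem_support_pairExp] at ha' hb' <;> rcases ha' with rfl | rfl <;> rcases hb' with rfl | rfl
  · exact absurd hab' (lt_irrefl _)
  · exact ⟨rfl, rfl⟩
  · exact absurd hab' hab.asymm
  · exact absurd hab' (lt_irrefl _)
  · exact absurd hab' (lt_irrefl _)
  · exact absurd inf_le_sup h'.not_le
  · exact absurd inf_le_sup h'.not_ge
  · exact absurd hab' (lt_irrefl _)

end Binomial

section Profile

variable {d : ℕ} (n : Fin d → ℕ)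

noncomputable def profile : (Idx n →₀ ℕ) →+ ℕ × ∀ i, Fin (n i) →₀ ℕ :=
  degree.prod (AddMonoidHom.pi fun i => Finsupp.mapDomain.addMonoidHom (· i))

variable (R : Type*) [CommSemiring R]

noncomputable def profileMap :
    MvPolynomial (Idx n) R →+* AddMonoidAlgebra R (ℕ × ∀ i, Fin (n i) →₀ ℕ) :=
  AddMonoidAlgebra.mapDomainRingHom R (profile n)

variable {n R}

theorem profile_apply (u : Idx n →₀ ℕ) :
    profile n u = (degree u, fun i => u.mapDomain (· i)) := rfl

theorem profile_pairExp_inf_sup (a b : Idx n) :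
    profile n (pairExp (a ⊓ b) (a ⊔ b)) = profile n (pairExp a b) := by
  rw [profile_apply, profile_apply, degree_pairExp, degree_pairExp]
  congr 1
  funext i
  simp only [pairExp, Finsupp.mapDomain_add, Finsupp.mapDomain_single, Pi.inf_apply, Pi.sup_apply]
  rcases le_total (a i) (b i) with h | h
  · simp [h]
  · simp [h, add_comm]

theorem coeff_profileMap (f : MvPolynomial (Idx n) R) (m : Idx n →₀ ℕ) :
    (profileMap n R f).coeff (profile n m) =
      ∑ u ∈ f.support with profile n u = profile n m, coeff u f := by
  classical
  exact Finsupp.mapDomain_apply_eq_sum _ _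

theorem I0_le_ker_profileMap : I0 n ≤ RingHom.ker (profileMap n ℝ) := by
  refine Ideal.span_le.2 ?_
  rintro _ ⟨a, b, rfl⟩
  rw [SetLike.mem_coe, RingHom.mem_ker, ← rk1Binomial, rk1Binomial_eq, map_sub, profileMap,
    ← single_eq_monomial, ← single_eq_monomial, AddMonoidAlgebra.mapDomainRingHom_apply,
    AddMonoidAlgebra.mapDomainRingHom_apply, AddMonoidAlgebra.mapDomain_single,
    AddMonoidAlgebra.mapDomain_single, profile_pairExp_inf_sup, sub_self]

end Profile

section ChainMonomial

variable {d : ℕ} {n : Fin d → ℕ}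

theorem profile_eq_iff {u m : Idx n →₀ ℕ} :
    profile n u = profile n m ↔
      degree u = degree m ∧ ∀ i, u.mapDomain (· i) = m.mapDomain (· i) := by
  rw [profile_apply, profile_apply, Prod.mk.injEq, funext_iff]

theorem le_of_mem_support_of_profile_eq {m u : Idx n →₀ ℕ} {a c : Idx n}
    (hc : ∀ b ∈ m.support, b ≤ c) (h : profile n u = profile n m) (ha : a ∈ u.support) :
    a ≤ c := by
  classical
  intro i
  have hi : a i ∈ (u.mapDomain (· i)).support := by
    rw [Finsupp.mapDomain_support_of_subsingletonAddUnits]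
    exact Finset.mem_image_of_mem _ ha
  rw [(profile_eq_iff.1 h).2 i, Finsupp.mapDomain_support_of_subsingletonAddUnits,
    Finset.mem_image] at hi
  obtain ⟨b, hb, hbi⟩ := hi
  exact hbi ▸ hc b hb i

theorem apply_le_of_profile_eq {m u : Idx n →₀ ℕ} {c : Idx n}
    (hm : IsChain (· ≤ ·) (m.support : Set (Idx n))) (hc : c ∈ m.support)
    (hcm : ∀ b ∈ m.support, b ≤ c) (h : profile n u = profile n m) : u c ≤ m c := by
  classical
  obtain ⟨hdeg, hcoord⟩ := profile_eq_iff.1 h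
  by_cases hsub : m.support ⊆ {c}
  · calc u c ≤ degree u := Finsupp.le_degree c u
      _ = degree m := hdeg
      _ = m c := by conv_lhs => rw [Finsupp.support_subset_singleton.1 hsub, Finsupp.degree_single]
  -- The element `a` of the chain just below `c` gives a coordinate `i` separating `c` from the
  -- rest of the chain, so the `i`-th coordinate multiset of `m` counts exactly the copies of `c`.
  obtain ⟨a₀, ha₀, ha₀c⟩ := Finset.not_subset.1 hsub
  obtain ⟨a, ha, hamax⟩ := (m.support.erase c).exists_max_image toLex
    ⟨a₀, Finset.mem_erase.2 ⟨Finset.notMem_singleton.1 ha₀c, ha₀⟩⟩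
  have hbelow : ∀ b ∈ m.support, b ≠ c → b ≤ a := fun b hb hbc =>
    hm.le_of_toLex_le hb (Finset.mem_of_mem_erase ha) (hamax b (Finset.mem_erase.2 ⟨hbc, hb⟩))
  obtain ⟨i, hi⟩ := (Pi.lt_def.1 <| lt_of_le_of_ne (hcm a (Finset.mem_of_mem_erase ha))
    (Finset.ne_of_mem_erase ha)).2
  calc u c ≤ u.mapDomain (· i) (c i) := Finsupp.apply_le_mapDomain_apply _ u c
    _ = m.mapDomain (· i) (c i) := by rw [hcoord i]
    _ = m c := by
      rw [Finsupp.mapDomain_apply_eq_sum]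
      refine Finset.sum_eq_single_of_mem c (Finset.mem_filter.2 ⟨hc, rfl⟩) fun b hb hbc => ?_
      exact absurd (Finset.mem_filter.1 hb).2
        ((hbelow b (Finset.mem_filter.1 hb).1 hbc i).trans_lt hi).ne

theorem grevlexLt_of_profile_eq {m u : Idx n →₀ ℕ}
    (hm : IsChain (· ≤ ·) (m.support : Set (Idx n))) (h : profile n u = profile n m)
    (hne : u ≠ m) : grevlexLt m u := by
  induction hk : m.support.card generalizing m u with
  | zero =>
    rw [Finset.card_eq_zero, Finsupp.support_eq_empty] at hk
    subst hk
    rw [map_zero, profile_apply, Prod.ext_iff] at h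
    exact absurd ((Finsupp.degree_eq_zero_iff u).1 h.1) hne
  | succ k ih =>
    obtain ⟨c, hc, hcmax⟩ := m.support.exists_max_image toLex (Finset.card_pos.1 (by omega))
    have hcm : ∀ b ∈ m.support, b ≤ c := fun b hb => hm.le_of_toLex_le hb hc (hcmax b hb)
    have hcu : ∀ b ∈ u.support, b ≤ c := fun b hb => le_of_mem_support_of_profile_eq hcm h hb
    -- Either the top `c` of the chain witnesses `m < u`, or it can be removed from both.
    rcases (apply_le_of_profile_eq hm hc hcm h).lt_or_eq with hlt | heq
    · refine Or.inr ⟨(profile_eq_iff.1 h).1.symm, c, hlt, fun j hj => ?_⟩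
      have hzero : ∀ v : Idx n →₀ ℕ, (∀ b ∈ v.support, b ≤ c) → v j = 0 := fun v hv =>
        Finsupp.notMem_support_iff.1 fun hjv =>
          (Pi.toLex_monotone (hv j hjv)).not_gt (idxLt_iff_toLex_lt.1 hj)
      rw [hzero m hcm, hzero u hcu]
    · have hm' : m.erase c + single c (m c) = m := Finsupp.erase_add_single c m
      have hu' : u.erase c + single c (m c) = u := heq ▸ Finsupp.erase_add_single c u
      rw [← hm', ← hu', map_add, map_add] at h
      have key := (ih (hm.mono ?_) (add_right_cancel h) (fun h' => hne ?_) ?_).add_right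
        (single c (m c))
      · rwa [hm', hu'] at key
      · simp [Finsupp.support_erase]
      · rw [← hm', ← hu', h']
      · rw [Finsupp.support_erase, Finset.card_erase_of_mem hc, hk, Nat.add_sub_cancel]

end ChainMonomial

theorem exists_incompRel_of_isLeadMon_of_mem_I0 {d : ℕ} {n : Fin d → ℕ}
    {f : MvPolynomial (Idx n) ℝ} {m : Idx n →₀ ℕ} (hf : f ∈ I0 n) (hm : IsLeadMon f m) :
    ∃ a ∈ m.support, ∃ b ∈ m.support, IncompRel (· ≤ ·) a b := by
  by_contra! hcomp
  have hchain : IsChain (· ≤ ·) (m.support : Set (Idx n)) := fun a ha b hb _ =>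
    not_incompRel_iff_symmGen.1 (hcomp a ha b hb)
  have hsum : ∑ u ∈ f.support with profile n u = profile n m, coeff u f = 0 := by
    rw [← coeff_profileMap, RingHom.mem_ker.1 (I0_le_ker_profileMap hf)]
    rfl
  rw [Finset.sum_eq_single_of_mem (s := {u ∈ f.support | profile n u = profile n m}) m
    (Finset.mem_filter.2 ⟨hm.1, rfl⟩) fun u hu hne => ?_] at hsum
  · exact mem_support_iff.1 hm.1 hsum
  · rw [Finset.mem_filter] at hu
    exact absurd (hm.2 u hu.1 hne) (grevlexLt_asymm (grevlexLt_of_profile_eq hchain hu.2 hne))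

/-- `𝒢₀` is the reduced Gröbner basis of the rank-1 binomial ideal `I₀` w.r.t. grevlex. -/
theorem G0_isReducedGroebnerBasis {d : ℕ} (n : Fin d → ℕ) :
    IsReducedGroebnerBasis (G0 n) (I0 n) := by
  refine ⟨⟨span_G0 n, fun f hf _ m hm => ?_⟩, fun g hg => ?_⟩
  · obtain ⟨a, ha, b, hb, hab⟩ := exists_incompRel_of_isLeadMon_of_mem_I0 hf hm
    exact ⟨_, rk1Binomial_mem_G0 hab, _, isLeadMon_rk1Binomial hab, pairExp_le ha hb hab.ne⟩
  obtain ⟨a, b, hlt, hab, rfl⟩ := mem_G0_iff.1 hg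
  refine ⟨fun m hm => ?_, fun m hm g' hg' hne m' hm' hle => ?_⟩
  · rw [hm.unique (isLeadMon_rk1Binomial hab)]
    exact coeff_pairExp_rk1Binomial hab
  · obtain ⟨a', b', hlt', hab', rfl⟩ := mem_G0_iff.1 hg'
    rw [hm'.unique (isLeadMon_rk1Binomial hab')] at hle
    obtain ⟨rfl, rfl⟩ := eq_of_pairExp_le_of_mem_support_rk1Binomial hlt hlt' hab' hm hle
    exact hne rfl
end

section
/- For every pair of multi-indices a, b ∈ [𝐧], the polynomial x_a x_b − x_{a ∧̄ b} x_{a ∨̄ b} belongs to the ideal I_∞ = ⟨ x_a² − 1, x_a x_b − x_{a∧b} x_{a∨b} : a, b ∈ [𝐧] ⟩. -/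
/-
Write `c = a ∧ b`, `e = a ∨ b`, `c' = a ∧̄ b`, `e' = a ∨̄ b`. Coordinatewise one checks
`c' ∧ e = c` and `c' ∨ e = e'`, so modulo `I_∞`, where every variable squares to `1`,
`x_a x_b = x_c x_e = x_c x_{c'} (x_{c'} x_e) = x_c x_{c'} (x_c x_{e'}) = x_{c'} x_{e'}`.
-/

open MvPolynomial

/-- The largest element of `Fin m` (corresponding to the index value `n_i`). -/
def lastF (m : ℕ) [NeZero m] : Fin m :=
  ⟨m - 1, Nat.sub_lt (Nat.pos_of_ne_zero (NeZero.ne m)) one_pos⟩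

/-- `(a ∧̄ b)_i = min(a_i, b_i)` if `a_i ≠ b_i`, and `n_i` otherwise. -/
def bmin {d : ℕ} {n : Fin d → ℕ} [∀ i, NeZero (n i)] (a b : Idx n) : Idx n :=
  fun i => if a i = b i then lastF (n i) else min (a i) (b i)

/-- `(a ∨̄ b)_i = max(a_i, b_i)` if `a_i ≠ b_i`, and `n_i` otherwise. -/
def bmax {d : ℕ} {n : Fin d → ℕ} [∀ i, NeZero (n i)] (a b : Idx n) : Idx n :=
  fun i => if a i = b i then lastF (n i) else max (a i) (b i)

/-- The ideal `I_∞ = ⟨x_a² − 1, x_a x_b − x_{a∧b} x_{a∨b} : a, b ∈ [𝐧]⟩`. -/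
noncomputable def Iinf {d : ℕ} (n : Fin d → ℕ) : Ideal (MvPolynomial (Idx n) ℝ) :=
  Ideal.span ({f | ∃ a : Idx n, f = X a ^ 2 - 1} ∪ rk1Binomials n)

theorem le_lastF {m : ℕ} [NeZero m] (x : Fin m) : x ≤ lastF m := by
  rw [Fin.le_def, lastF]
  exact Nat.le_sub_one_of_lt x.isLt

section

variable {d : ℕ} {n : Fin d → ℕ}

theorem amin_bmin_amax [∀ i, NeZero (n i)] (a b : Idx n) :
    amin (bmin a b) (amax a b) = amin a b := by
  funext i
  simp only [amin, amax, bmin]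
  split_ifs with h
  · rw [h, max_self, min_self]
    exact min_eq_right (le_lastF _)
  · exact min_eq_left min_le_max

theorem amax_bmin_amax [∀ i, NeZero (n i)] (a b : Idx n) :
    amax (bmin a b) (amax a b) = bmax a b := by
  funext i
  simp only [amax, bmin, bmax]
  split_ifs with h
  · rw [h, max_self]
    exact max_eq_left (le_lastF _)
  · exact max_eq_right min_le_max

theorem mk_X_sq_Iinf (a : Idx n) :
    Ideal.Quotient.mk (Iinf n) (X a) ^ 2 = 1 := by
  rw [← map_pow, ← map_one (Ideal.Quotient.mk (Iinf n)), Ideal.Quotient.eq]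
  exact Ideal.subset_span (Or.inl ⟨a, rfl⟩)

theorem mk_X_mul_X_Iinf (a b : Idx n) :
    Ideal.Quotient.mk (Iinf n) (X a) * Ideal.Quotient.mk (Iinf n) (X b) =
      Ideal.Quotient.mk (Iinf n) (X (amin a b)) * Ideal.Quotient.mk (Iinf n) (X (amax a b)) := by
  rw [← map_mul, ← map_mul, Ideal.Quotient.eq]
  exact Ideal.subset_span (Or.inr ⟨a, b, rfl⟩)

end

/-- For every pair of multi-indices `a, b`, the polynomial
`x_a x_b − x_{a∧̄b} x_{a∨̄b}` belongs to `I_∞`. -/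
theorem barBinomial_mem_Iinf {d : ℕ} {n : Fin d → ℕ} [∀ i, NeZero (n i)]
    (a b : Idx n) :
    X a * X b - X (bmin a b) * X (bmax a b) ∈ Iinf n := by
  rw [← Ideal.Quotient.eq, map_mul, map_mul]
  set x : Idx n → _ := fun c => Ideal.Quotient.mk (Iinf n) (X c)
  change x a * x b = x (bmin a b) * x (bmax a b)
  have hsq : ∀ c, x c ^ 2 = 1 := mk_X_sq_Iinf
  have hmul : x (bmin a b) * x (amax a b) = x (amin a b) * x (bmax a b) := by
    rw [mk_X_mul_X_Iinf, amin_bmin_amax, amax_bmin_amax]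
  calc x a * x b
      = x (amin a b) * x (amax a b) := mk_X_mul_X_Iinf a b
    _ = x (amin a b) * x (bmin a b) * (x (bmin a b) * x (amax a b)) := by
        linear_combination (-(x (amin a b) * x (amax a b))) * hsq (bmin a b)
    _ = x (amin a b) * x (bmin a b) * (x (amin a b) * x (bmax a b)) := by rw [hmul]
    _ = x (bmin a b) * x (bmax a b) := by
        linear_combination (x (bmin a b) * x (bmax a b)) * hsq (amin a b)
end

section
/- The ideal I₁ = ⟨ x_a³ − x_a, x_a x_b (a ≠ b), Σ_a x_a² − 1 ⟩ ⊂ ℝ[x_a : a ∈ [𝐧]] is real radical. -/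
open MvPolynomial

/-- The ideal `I₁ = ⟨x_a³ − x_a, x_a x_b (a ≠ b), Σ_a x_a² − 1⟩`. -/
noncomputable def I1 {d : ℕ} (n : Fin d → ℕ) : Ideal (MvPolynomial (Idx n) ℝ) :=
  Ideal.span ({f | ∃ a : Idx n, f = X a ^ 3 - X a} ∪
    {f | ∃ a b : Idx n, a ≠ b ∧ f = X a * X b} ∪
    {(∑ a : Idx n, X a ^ 2) - 1})

section Aux

variable {d : ℕ} (n : Fin d → ℕ)

lemma I1.gen1_mem (a : Idx n) : X a ^ 3 - X a ∈ I1 n :=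
  Ideal.subset_span (Or.inl (Or.inl ⟨a, rfl⟩))

lemma I1.gen2_mem {a b : Idx n} (h : a ≠ b) : X a * X b ∈ I1 n :=
  Ideal.subset_span (Or.inl (Or.inr ⟨a, b, h, rfl⟩))

lemma I1.gen3_mem : (∑ a : Idx n, X a ^ 2) - 1 ∈ I1 n :=
  Ideal.subset_span (Or.inr rfl)

lemma I1.y_pow3 (a : Idx n) :
    (Ideal.Quotient.mk (I1 n) (X a)) ^ 3 = Ideal.Quotient.mk (I1 n) (X a) := by
  have := (Ideal.Quotient.eq_zero_iff_mem).mpr (I1.gen1_mem n a)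
  rw [map_sub, map_pow, sub_eq_zero] at this
  exact this

lemma I1.y_mul (a b : Idx n) (h : a ≠ b) :
    Ideal.Quotient.mk (I1 n) (X a) * Ideal.Quotient.mk (I1 n) (X b) = 0 := by
  have := (Ideal.Quotient.eq_zero_iff_mem).mpr (I1.gen2_mem n h)
  rw [map_mul] at this
  exact this

/-- Reduction lemma: every polynomial is congruent mod `I1` to
`C c + ∑ l a • X a + ∑ m a • X a ^ 2`. -/
lemma I1.reduce (f : MvPolynomial (Idx n) ℝ) :
    ∃ c : ℝ, ∃ l m : Idx n → ℝ,
      Ideal.Quotient.mk (I1 n) f =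
        Ideal.Quotient.mk (I1 n)
          (C c + ∑ a : Idx n, C (l a) * X a + ∑ a : Idx n, C (m a) * X a ^ 2) := by
  induction f using MvPolynomial.induction_on with
  | C r => exact ⟨r, 0, 0, by simp⟩
  | add p q hp hq =>
      obtain ⟨c1, l1, m1, h1⟩ := hp
      obtain ⟨c2, l2, m2, h2⟩ := hq
      refine ⟨c1 + c2, l1 + l2, m1 + m2, ?_⟩
      rw [map_add, h1, h2, ← map_add]
      congr 1
      simp only [Pi.add_apply, C_add, add_mul, Finset.sum_add_distrib]
      ring
  | mul_X p a hp =>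
      obtain ⟨c, l, m, h⟩ := hp
      refine ⟨0, fun b => if b = a then c + m a else 0,
        fun b => if b = a then l a else 0, ?_⟩
      rw [map_mul, h]
      simp only [map_add, map_mul, map_sum, map_pow]
      set π := Ideal.Quotient.mk (I1 n)
      set y : Idx n → _ := fun b => π (X b) with hy
      have key0 : ∀ b, b ≠ a → y b * y a = 0 := fun b hb => I1.y_mul n b a hb
      have key3 : y a ^ 3 = y a := I1.y_pow3 n a
      have hC0 : ∀ (r : ℝ), π (C r) = algebraMap ℝ _ r := fun r => rfl
      -- RHS simplification
      have hrhs :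
          π (C (0:ℝ)) + (∑ b : Idx n, π (C (if b = a then c + m a else 0)) * y b)
            + ∑ b : Idx n, π (C (if b = a then l a else 0)) * y b ^ 2
          = π (C (c + m a)) * y a + π (C (l a)) * y a ^ 2 := by
        rw [Finset.sum_eq_single a
          (fun b _ hb => by rw [if_neg hb, map_zero, map_zero, zero_mul])
          (fun h => absurd (Finset.mem_univ a) h),
          Finset.sum_eq_single a
          (fun b _ hb => by rw [if_neg hb, map_zero, map_zero, zero_mul])
          (fun h => absurd (Finset.mem_univ a) h),
          if_pos rfl, if_pos rfl, map_zero, map_zero, zero_add]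
      rw [hrhs]
      -- LHS
      rw [add_mul, add_mul, Finset.sum_mul, Finset.sum_mul]
      have hsum1 : (∑ b : Idx n, π (C (l b)) * y b * y a) = π (C (l a)) * y a ^ 2 := by
        rw [Finset.sum_eq_single a
          (fun b _ hb => by rw [mul_assoc, key0 b hb, mul_zero])
          (fun h => absurd (Finset.mem_univ a) h)]
        ring
      have hsum2 : (∑ b : Idx n, π (C (m b)) * y b ^ 2 * y a) = π (C (m a)) * y a := by
        rw [Finset.sum_eq_single a
          (fun b _ hb => by
            have : y b ^ 2 * y a = y b * (y b * y a) := by ring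
            rw [mul_assoc, this, key0 b hb, mul_zero, mul_zero])
          (fun h => absurd (Finset.mem_univ a) h)]
        have : y a ^ 2 * y a = y a ^ 3 := by ring
        rw [mul_assoc, this, key3]
      rw [hsum1, hsum2, hC0, hC0, hC0, hC0, map_add]
      ring

/-- Evaluation at a signed standard basis vector kills every element of `I1`. -/
lemma I1.eval_pt (a : Idx n) (s : ℝ) (hs : s ^ 2 = 1) :
    ∀ g ∈ I1 n, eval (fun b => if b = a then s else 0) g = 0 := by
  intro g hg
  have hle : I1 n ≤ RingHom.ker (eval (fun b => if b = a then s else 0) :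
      MvPolynomial (Idx n) ℝ →+* ℝ) := by
    rw [I1, Ideal.span_le]
    rintro g (⟨a', rfl⟩ | hB | rfl)
    · simp only [SetLike.mem_coe, RingHom.mem_ker, map_sub, map_pow, eval_X]
      by_cases h : a' = a
      · rw [if_pos h, pow_succ, hs, one_mul, sub_self]
      · rw [if_neg h]; norm_num
    · rename_i hB
      obtain ⟨a', b', hne, rfl⟩ := hB
      simp only [SetLike.mem_coe, RingHom.mem_ker, map_mul, eval_X]
      rcases ne_or_eq a' a with h | h
      · rw [if_neg h, zero_mul]
      · subst h
        have hb : b' ≠ a' := fun hh => hne hh.symm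
        rw [if_neg hb, mul_zero]
    · simp only [SetLike.mem_coe, RingHom.mem_ker, map_sub, map_sum, map_pow, map_one,
        eval_X]
      have hss : (∑ b : Idx n, (if b = a then s else 0) ^ 2) = s ^ 2 := by
        rw [Finset.sum_eq_single a
          (fun b _ hb => by rw [if_neg hb]; ring)
          (fun h => absurd (Finset.mem_univ a) h), if_pos rfl]
      rw [hss, hs, sub_self]
  exact hle hg

end Aux

/-- `I₁` is real radical: it equals the vanishing ideal of its real zero set, i.e.
a polynomial lies in `I₁` iff it vanishes on all real common zeros of `I₁`. -/
theorem I1_realRadical {d : ℕ} (n : Fin d → ℕ) (f : MvPolynomial (Idx n) ℝ) :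
    f ∈ I1 n ↔
      ∀ x : Idx n → ℝ, (∀ g ∈ I1 n, eval x g = 0) → eval x f = 0 := by
  constructor
  · intro hf x hx
    exact hx f hf
  · intro h
    cases isEmpty_or_nonempty (Idx n) with
    | inl he =>
        have h3 := I1.gen3_mem n
        rw [Finset.univ_eq_empty, Finset.sum_empty, zero_sub] at h3
        have : (1 : MvPolynomial (Idx n) ℝ) ∈ I1 n := by
          have := (I1 n).neg_mem h3
          simpa using this
        exact (I1 n).eq_top_iff_one.mpr this ▸ Submodule.mem_top
    | inr hne =>
      obtain ⟨c, l, m, hred⟩ := I1.reduce n f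
      set g : MvPolynomial (Idx n) ℝ :=
        C c + ∑ a : Idx n, C (l a) * X a + ∑ a : Idx n, C (m a) * X a ^ 2 with hg
      have hfg : f - g ∈ I1 n := (Ideal.Quotient.eq).mp hred
      -- evaluate g at signed basis vectors
      have heval : ∀ (a : Idx n) (s : ℝ), s ^ 2 = 1 →
          c + l a * s + m a * s ^ 2 = 0 := by
        intro a s hs
        have hz := I1.eval_pt n a s hs
        have hf0 : eval (fun b => if b = a then s else 0) f = 0 := h _ hz
        have hg0 : eval (fun b => if b = a then s else 0) g = 0 := by
          have := hz _ hfg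
          rw [map_sub, hf0, zero_sub, neg_eq_zero] at this
          exact this
        rw [hg] at hg0
        simp only [map_add, map_sum, map_mul, map_pow, eval_C, eval_X] at hg0
        have h1 : (∑ b : Idx n, l b * if b = a then s else 0) = l a * s := by
          rw [Finset.sum_eq_single a
            (fun b _ hb => by rw [if_neg hb, mul_zero])
            (fun h => absurd (Finset.mem_univ a) h), if_pos rfl]
        have h2 : (∑ b : Idx n, m b * (if b = a then s else 0) ^ 2) = m a * s ^ 2 := by
          rw [Finset.sum_eq_single a
            (fun b _ hb => by rw [if_neg hb]; ring)
            (fun h => absurd (Finset.mem_univ a) h), if_pos rfl]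
        rw [h1, h2] at hg0
        exact hg0
      have hl : ∀ a, l a = 0 := by
        intro a
        have e1 := heval a 1 (by norm_num)
        have e2 := heval a (-1) (by norm_num)
        nlinarith [e1, e2]
      have hm : ∀ a, m a = -c := by
        intro a
        have e1 := heval a 1 (by norm_num)
        have := hl a
        nlinarith [e1, this]
      have hgmem : g ∈ I1 n := by
        have hg' : g = -C c * ((∑ a : Idx n, X a ^ 2) - 1) := by
          rw [hg]
          have : ∀ a : Idx n, C (l a) * X a = 0 := by
            intro a; rw [hl a, map_zero, zero_mul]
          rw [Finset.sum_congr rfl (fun a _ => this a)]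
          have hm' : ∀ a : Idx n, C (m a) * X a ^ 2 = -C c * X a ^ 2 := by
            intro a; rw [hm a]; simp [map_neg]
          rw [Finset.sum_congr rfl (fun a _ => hm' a)]
          rw [mul_sub, ← Finset.mul_sum]
          simp
          ring
        rw [hg']
        exact Ideal.mul_mem_left _ _ (I1.gen3_mem n)
      have : f = (f - g) + g := by ring
      rw [this]
      exact (I1 n).add_mem hfg hgmem
end

section
/- Let C ⊂ ℝⁿ be a closed convex set defined as the intersection over a family F of convex quadratic polynomials f(x) = xᵀA_f x + B_f x + c_f (with A_f positive semidefinite) of the sets {x : f(x) ≤ 0}, and let x₀ ∈ C satisfy f(x₀) = 0 for all f ∈ F. If ∩_{f∈F} ker(A_f) = {0}, then x₀ is an extreme point of C. -/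
/-!
Along a segment, a quadric `q(x) = xᵀAx + Bx + c` satisfies
`a q(y) + b q(z) - q(a y + b z) = a b (y - z)ᵀ A (y - z)` for `a + b = 1`. If `q ≤ 0` at both ends
and `q = 0` at an interior point, the left side is `≤ 0`, so positive semidefiniteness forces
`A (y - z) = 0`. When this holds for every quadric of the family, the kernel condition gives `y = z`.
-/

/-- Euclidean inner product on `ℝⁿ`. -/
def dotR {m : ℕ} (v w : Fin m → ℝ) : ℝ := ∑ i, v i * w i

open Matrix

namespace Matrix

variable {n R : Type*} [Fintype n] [CommRing R]

def quadric (A : Matrix n n R) (B : n → R) (c : R) (x : n → R) : R :=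
  x ⬝ᵥ A *ᵥ x + B ⬝ᵥ x + c

theorem quadric_convexComb_gap (A : Matrix n n R) (B : n → R) (c : R)
    (x y : n → R) {a b : R} (hab : a + b = 1) :
    a * quadric A B c x + b * quadric A B c y - quadric A B c (a • x + b • y) =
      a * b * ((x - y) ⬝ᵥ A *ᵥ (x - y)) := by
  obtain rfl : b = 1 - a := eq_sub_of_add_eq' hab
  simp only [quadric, mulVec_add, mulVec_sub, mulVec_smul, dotProduct_add, dotProduct_sub,
    add_dotProduct, sub_dotProduct, smul_dotProduct, dotProduct_smul, smul_eq_mul]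
  ring

theorem mulVec_sub_eq_zero_of_quadric_nonpos_of_convexComb_nonneg
    {A : Matrix n n ℝ} (hA : A.PosSemidef) (B : n → ℝ) (c : ℝ) {x y : n → ℝ} {a b : ℝ}
    (ha : 0 < a) (hb : 0 < b) (hab : a + b = 1)
    (hx : quadric A B c x ≤ 0) (hy : quadric A B c y ≤ 0)
    (hxy : 0 ≤ quadric A B c (a • x + b • y)) :
    A *ᵥ (x - y) = 0 := by
  have hgap := quadric_convexComb_gap A B c x y hab
  have hnonneg : 0 ≤ (x - y) ⬝ᵥ A *ᵥ (x - y) := by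
    simpa using hA.dotProduct_mulVec_nonneg (x - y)
  have hzero : (x - y) ⬝ᵥ A *ᵥ (x - y) = 0 := by
    nlinarith [mul_pos ha hb, mul_nonpos_of_nonneg_of_nonpos ha.le hx,
      mul_nonpos_of_nonneg_of_nonpos hb.le hy]
  simpa using (hA.dotProduct_mulVec_zero_iff (x - y)).mp (by simpa using hzero)

end Matrix

/-- Let `C = ∩_{f ∈ F} {x : f(x) ≤ 0}` for a family `F` of convex quadrics
`f(x) = xᵀ A_f x + B_f x + c_f` with `A_f` positive semidefinite, and let `x₀` satisfy
`f(x₀) = 0` for all `f ∈ F`.  If `∩_{f ∈ F} ker(A_f) = {0}`, then `x₀` is an extreme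
point of `C`. -/
theorem extremePoint_of_convex_quadrics {m : ℕ} {ι : Type*}
    (A : ι → Matrix (Fin m) (Fin m) ℝ) (B : ι → Fin m → ℝ) (c : ι → ℝ)
    (hA : ∀ i, (A i).PosSemidef)
    (C : Set (Fin m → ℝ))
    (hC : C = {x | ∀ i, dotR x ((A i).mulVec x) + dotR (B i) x + c i ≤ 0})
    (x₀ : Fin m → ℝ)
    (hx₀ : ∀ i, dotR x₀ ((A i).mulVec x₀) + dotR (B i) x₀ + c i = 0)
    (hker : ∀ v : Fin m → ℝ, (∀ i, (A i).mulVec v = 0) → v = 0) :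
    x₀ ∈ Set.extremePoints ℝ C := by
  change ∀ i, quadric (A i) (B i) (c i) x₀ = 0 at hx₀
  change C = {x | ∀ i, quadric (A i) (B i) (c i) x ≤ 0} at hC
  subst hC
  refine ⟨fun i => (hx₀ i).le, fun y hy z hz hx₀yz => ?_⟩
  obtain ⟨a, b, ha, hb, hab, rfl⟩ := hx₀yz
  obtain rfl : y = z := sub_eq_zero.mp <| hker _ fun i =>
    mulVec_sub_eq_zero_of_quadric_nonpos_of_convexComb_nonneg (hA i) (B i) (c i)
      ha hb hab (hy i) (hz i) (hx₀ i).ge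
  rw [← add_smul, hab, one_smul]
end

section
/- Let S = { x : Σ x_i A_i + A_0 ⪰ 0 } be a spectrahedron and write Q_x = A_0 + Σ x_i A_i. Then Q_l spans an extreme ray of the spectrahedral cone (A_0 = 0) if and only if Q_l has maximal kernel: whenever ker(Q_p) ⊇ ker(Q_l) for some p in the cone, Q_p is a scalar multiple of Q_l. -/
/-!
If `ker M ⊆ ker P` for a positive semidefinite `M` and a symmetric `P`, then `M - εP ⪰ 0` for
some `ε > 0`: after diagonalizing `M`, the rows of `P` vanish outside the support of the
eigenvalues, and there the quadratic form of `P` is dominated by its absolute row sums. Hence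
`M = (M - εP) + εP` splits `M` inside the cone, and extremality makes `P` a multiple of `M`.
Conversely, a splitting `M = Y + Z` inside the cone has `ker M ⊆ ker Y`, because the quadratic
forms of `Y` and `Z` are nonnegative and add up to that of `M`; so a maximal kernel makes `Y` a
multiple of `M`, and positivity makes the factor nonnegative.
-/

open Matrix Filter Topology

namespace Matrix

section RCLike

open scoped ComplexOrder MatrixOrder

variable {n 𝕜 : Type*} [RCLike 𝕜]

theorem PosSemidef.mulVec_eq_zero_of_add_mulVec_eq_zero [Fintype n] {Y Z : Matrix n n 𝕜}
    (hY : Y.PosSemidef) (hZ : Z.PosSemidef) {v : n → 𝕜} (hv : (Y + Z) *ᵥ v = 0) :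
    Y *ᵥ v = 0 := by
  have hsum : star v ⬝ᵥ Y *ᵥ v + star v ⬝ᵥ Z *ᵥ v = 0 := by
    rw [← dotProduct_add, ← add_mulVec, hv, dotProduct_zero]
  have hYv := ((add_eq_zero_iff_of_nonneg (hY.dotProduct_mulVec_nonneg v)
    (hZ.dotProduct_mulVec_nonneg v)).1 hsum).1
  exact (hY.dotProduct_mulVec_zero_iff v).1 hYv

theorem PosSemidef.exists_nonneg_smul_eq {M : Matrix n n 𝕜} (hM : M.PosSemidef) {r : ℝ}
    (hrM : (r • M).PosSemidef) : ∃ s : ℝ, 0 ≤ s ∧ r • M = s • M := by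
  rcases le_or_gt 0 r with hr | hr
  · exact ⟨r, hr, rfl⟩
  · have hnegM : (-M).PosSemidef := by
      have := hrM.smul (inv_nonneg.2 (neg_nonneg.2 hr.le))
      rwa [smul_smul, inv_mul_eq_div, div_neg, div_self hr.ne, neg_one_smul] at this
    have hM0 : M = 0 := le_antisymm (by simpa [le_iff] using hnegM) (by simpa [le_iff] using hM)
    exact ⟨0, le_rfl, by simp [hM0]⟩

end RCLike

variable {n : Type*} [Fintype n]

theorem IsHermitian.dotProduct_mulVec_le {P : Matrix n n ℝ} (hP : P.IsHermitian) (v : n → ℝ) :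
    v ⬝ᵥ P *ᵥ v ≤ ∑ i, (∑ j, |P i j|) * v i ^ 2 := by
  have hterm : ∀ i j, v i * (P i j * v j) ≤ |P i j| * v i ^ 2 / 2 + |P j i| * v j ^ 2 / 2 := by
    intro i j
    rw [← hP.apply i j, star_trivial]
    rcases abs_cases (P j i) with ⟨h, _⟩ | ⟨h, _⟩ <;> rw [h] <;>
      nlinarith [sq_nonneg (v i - v j), sq_nonneg (v i + v j)]
  calc v ⬝ᵥ P *ᵥ v = ∑ i, ∑ j, v i * (P i j * v j) := by
        simp only [dotProduct, mulVec, Finset.mul_sum]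
    _ ≤ ∑ i, ∑ j, (|P i j| * v i ^ 2 / 2 + |P j i| * v j ^ 2 / 2) :=
        Finset.sum_le_sum fun i _ => Finset.sum_le_sum fun j _ => hterm i j
    _ = ∑ i, (∑ j, |P i j|) * v i ^ 2 := by
        simp only [Finset.sum_add_distrib]
        rw [Finset.sum_comm (f := fun i j => |P j i| * v j ^ 2 / 2), ← Finset.sum_add_distrib]
        simp only [Finset.sum_mul]
        refine Finset.sum_congr rfl fun i _ => ?_
        rw [← Finset.sum_add_distrib]
        exact Finset.sum_congr rfl fun j _ => by ring

theorem posSemidef_diagonal_sub_smul [DecidableEq n] {d : n → ℝ} {P : Matrix n n ℝ}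
    (hP : P.IsHermitian) {ε : ℝ} (hε : 0 ≤ ε) (hd : ∀ i, ε * ∑ j, |P i j| ≤ d i) :
    (diagonal d - ε • P).PosSemidef := by
  refine .of_dotProduct_mulVec_nonneg ((isHermitian_diagonal d).sub (hP.smul (.all ε)))
    fun v => ?_
  have hdiag : v ⬝ᵥ diagonal d *ᵥ v = ∑ i, d i * v i ^ 2 := by
    simp only [dotProduct, mulVec_diagonal]
    exact Finset.sum_congr rfl fun i _ => by ring
  have hPv : ε * (v ⬝ᵥ P *ᵥ v) ≤ ∑ i, d i * v i ^ 2 :=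
    calc ε * (v ⬝ᵥ P *ᵥ v) ≤ ε * ∑ i, (∑ j, |P i j|) * v i ^ 2 :=
          mul_le_mul_of_nonneg_left (hP.dotProduct_mulVec_le v) hε
      _ = ∑ i, ε * (∑ j, |P i j|) * v i ^ 2 := by
            rw [Finset.mul_sum]; exact Finset.sum_congr rfl fun i _ => by ring
      _ ≤ ∑ i, d i * v i ^ 2 :=
          Finset.sum_le_sum fun i _ => mul_le_mul_of_nonneg_right (hd i) (sq_nonneg _)
  rw [star_trivial, sub_mulVec, dotProduct_sub, hdiag, smul_mulVec, dotProduct_smul, smul_eq_mul]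
  linarith

theorem exists_pos_posSemidef_diagonal_sub_smul [DecidableEq n] {d : n → ℝ} {P : Matrix n n ℝ}
    (hd : 0 ≤ d) (hP : P.IsHermitian) (hker : ∀ v, diagonal d *ᵥ v = 0 → P *ᵥ v = 0) :
    ∃ ε : ℝ, 0 < ε ∧ (diagonal d - ε • P).PosSemidef := by
  have hrow : ∀ i, d i = 0 → ∀ j, P i j = 0 := by
    intro i hi j
    have hcol := congrFun (hker (Pi.single i 1) (by simp [hi])) j
    rw [← hP.apply, star_trivial]
    simpa using hcol
  have hsmall : ∀ i, ∀ᶠ ε in 𝓝 (0 : ℝ), ε * ∑ j, |P i j| ≤ d i := by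
    intro i
    rcases (hd i).eq_or_lt with hi | hi
    · simp [hrow i hi.symm, ← hi]
    · exact ((continuous_id.mul continuous_const).tendsto' 0 0 (zero_mul _)).eventually_le_const hi
  obtain ⟨ε, hε, hεpos⟩ := ((eventually_all.2 hsmall).filter_mono nhdsWithin_le_nhds |>.and
    (self_mem_nhdsWithin (s := Set.Ioi 0))).exists
  exact ⟨ε, hεpos, posSemidef_diagonal_sub_smul hP (le_of_lt hεpos) hε⟩

theorem PosSemidef.exists_pos_posSemidef_sub_smul [DecidableEq n] {M P : Matrix n n ℝ}
    (hM : M.PosSemidef) (hP : P.IsHermitian) (hker : ∀ v, M *ᵥ v = 0 → P *ᵥ v = 0) :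
    ∃ ε : ℝ, 0 < ε ∧ (M - ε • P).PosSemidef := by
  set U : Matrix n n ℝ := (hM.1.eigenvectorUnitary : Matrix n n ℝ)
  set D := diagonal hM.1.eigenvalues
  have hMU : M = U * D * star U := by simpa using hM.1.spectral_theorem
  have hUU : star U * U = 1 := Unitary.coe_star_mul_self _
  have hUU' : U * star U = 1 := Unitary.coe_mul_star_self _
  set P' := star U * P * U
  have hker' : ∀ v, D *ᵥ v = 0 → P' *ᵥ v = 0 := by
    intro v hv
    have hMv : M *ᵥ (U *ᵥ v) = 0 := by
      rw [hMU, mulVec_mulVec, Matrix.mul_assoc, Matrix.mul_assoc, hUU, Matrix.mul_one,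
        ← mulVec_mulVec, hv, mulVec_zero]
    rw [← mulVec_mulVec, ← mulVec_mulVec, hker _ hMv, mulVec_zero]
  obtain ⟨ε, hε, hpsd⟩ := exists_pos_posSemidef_diagonal_sub_smul (fun i => hM.eigenvalues_nonneg i)
    (isHermitian_conjTranspose_mul_mul U hP) hker'
  have hconj : M - ε • P = U * (D - ε • P') * star U := by
    rw [Matrix.mul_sub, Matrix.sub_mul, ← hMU, Matrix.mul_smul, Matrix.smul_mul]
    simp only [P', ← Matrix.mul_assoc, hUU', Matrix.one_mul]
    rw [Matrix.mul_assoc, hUU', Matrix.mul_one]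
  exact ⟨ε, hε, hconj ▸ hpsd.mul_mul_conjTranspose_same U⟩

end Matrix

def spectrahedralCone {n : Type*} (L : Submodule ℝ (Matrix n n ℝ)) : Set (Matrix n n ℝ) :=
  {M | M ∈ L ∧ M.PosSemidef}

theorem spectrahedralCone_span_range {ι n : Type*} [Fintype ι] (A : ι → Matrix n n ℝ) :
    {M | (∃ x : ι → ℝ, M = ∑ i, x i • A i) ∧ M.PosSemidef} =
      spectrahedralCone (Submodule.span ℝ (Set.range A)) := by
  ext M
  simp only [spectrahedralCone, Set.mem_ofPred_eq, Submodule.mem_span_range_iff_exists_fun,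
    eq_comm]

section spectrahedralCone

variable {n : Type*} [Fintype n] {L : Submodule ℝ (Matrix n n ℝ)} {M : Matrix n n ℝ}

theorem exists_eq_smul_of_ker_le [DecidableEq n] (hM : M ∈ spectrahedralCone L)
    (hext : ∀ Y ∈ spectrahedralCone L, ∀ Z ∈ spectrahedralCone L, M = Y + Z →
      ∃ r : ℝ, 0 ≤ r ∧ Z = r • M)
    {P : Matrix n n ℝ} (hP : P ∈ spectrahedralCone L) (hker : ∀ v, M *ᵥ v = 0 → P *ᵥ v = 0) :
    ∃ r : ℝ, P = r • M := by
  obtain ⟨ε, hε, hpsd⟩ := hM.2.exists_pos_posSemidef_sub_smul hP.2.1 hker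
  obtain ⟨r, -, hr⟩ := hext (M - ε • P) ⟨L.sub_mem hM.1 (L.smul_mem ε hP.1), hpsd⟩ (ε • P)
    ⟨L.smul_mem ε hP.1, hP.2.smul hε.le⟩ (sub_add_cancel M _).symm
  exact ⟨ε⁻¹ * r, by rw [mul_smul, ← hr, inv_smul_smul₀ hε.ne']⟩

theorem exists_nonneg_smul_eq_of_add_eq
    (hmax : ∀ P ∈ spectrahedralCone L, (∀ v, M *ᵥ v = 0 → P *ᵥ v = 0) → ∃ r : ℝ, P = r • M)
    {Y Z : Matrix n n ℝ} (hY : Y ∈ spectrahedralCone L) (hZ : Z.PosSemidef) (h : M = Y + Z) :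
    ∃ r : ℝ, 0 ≤ r ∧ Y = r • M := by
  obtain ⟨r, hr⟩ := hmax Y hY fun v hv => hY.2.mulVec_eq_zero_of_add_mulVec_eq_zero hZ (h ▸ hv)
  obtain ⟨s, hs, hrs⟩ := (h ▸ hY.2.add hZ : M.PosSemidef).exists_nonneg_smul_eq (hr ▸ hY.2)
  exact ⟨s, hs, hr.trans hrs⟩

end spectrahedralCone

theorem extreme_ray_iff_maximal_kernel_general {k m : ℕ}
    (A : Fin k → Matrix (Fin m) (Fin m) ℝ)
    (S : Set (Matrix (Fin m) (Fin m) ℝ))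
    (hS : S = {M | (∃ x : Fin k → ℝ, M = ∑ i, x i • A i) ∧ M.PosSemidef})
    (M : Matrix (Fin m) (Fin m) ℝ) (hM : M ∈ S) :
    (∀ Y ∈ S, ∀ Z ∈ S, M = Y + Z →
        (∃ r : ℝ, 0 ≤ r ∧ Y = r • M) ∧ (∃ r : ℝ, 0 ≤ r ∧ Z = r • M)) ↔
      (∀ P ∈ S, (∀ v : Fin m → ℝ, M.mulVec v = 0 → P.mulVec v = 0) →
        ∃ r : ℝ, P = r • M) := by
  rw [hS, spectrahedralCone_span_range] at hM ⊢
  constructor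
  · intro hext P hP hker
    exact exists_eq_smul_of_ker_le hM (fun Y hY Z hZ h => (hext Y hY Z hZ h).2) hP hker
  · intro hmax Y hY Z hZ h
    exact ⟨exists_nonneg_smul_eq_of_add_eq hmax hY hZ.2 h,
      exists_nonneg_smul_eq_of_add_eq hmax hZ hY.2 (h.trans (add_comm Y Z))⟩

/-- A nonzero matrix `M = Q_l` in the spectrahedral cone
`S = {Σ_i x_i A_i : Σ_i x_i A_i ⪰ 0}` spans an extreme ray (every decomposition
`M = Y + Z` with `Y, Z ∈ S` has `Y, Z` nonnegative multiples of `M`) if and only if `M`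
has maximal kernel: whenever `P ∈ S` satisfies `ker P ⊇ ker M`, `P` is a scalar multiple
of `M`. -/
theorem extreme_ray_iff_maximal_kernel {k m : ℕ}
    (A : Fin k → Matrix (Fin m) (Fin m) ℝ) (hA : ∀ i, (A i).IsSymm)
    (S : Set (Matrix (Fin m) (Fin m) ℝ))
    (hS : S = {M | (∃ x : Fin k → ℝ, M = ∑ i, x i • A i) ∧ M.PosSemidef})
    (M : Matrix (Fin m) (Fin m) ℝ) (hM : M ∈ S) (hM0 : M ≠ 0) :
    (∀ Y ∈ S, ∀ Z ∈ S, M = Y + Z →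
        (∃ r : ℝ, 0 ≤ r ∧ Y = r • M) ∧ (∃ r : ℝ, 0 ≤ r ∧ Z = r • M)) ↔
      (∀ P ∈ S, (∀ v : Fin m → ℝ, M.mulVec v = 0 → P.mulVec v = 0) →
        ∃ r : ℝ, P = r • M) :=
  extreme_ray_iff_maximal_kernel_general A S hS M hM
end
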